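/- arXiv:1401.4879 — 8 statements merged into one kernel-verified Lean document; each statement's English description precedes it below -/
import Mathlib

section
/- Let f : ℝ → ℝ be twice differentiable and let ζ be a zero of f. Let a < b < c be real numbers such that: (1) c − b ≤ (b − a)/2; (2) b ≤ ζ ≤ c; (3) the first derivative of f is positive on the half-open interval (a, c]; (4) there exists a real number e such that 2^e ≤ f″(x) ≤ 2^{e+1} for all x ∈ [a, c]. Define the Newton iterates z₀ = c and z_{i+1} = z_i − f(z_i)/f′(z_i). Then for every natural number i the iterate z_i is well defined (in particular f′(z_i) ≠ 0) and |z_i − ζ| ≤ 2^{1−2^i} · |c − ζ|. -/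
/-! On `[a, c]` the function is convex with `2^e ≤ f'' ≤ 2^(e+1)`. Convexity keeps the Newton
iterates from `c` inside `[ζ, c]`, and the upper bound on `f''` gives the Taylor estimate
`f' w (w - ζ) - f w ≤ 2^e (w - ζ)^2`, so one step maps the error `w - ζ` to at most
`2^e (w - ζ)^2 / f' w`. Since `f' a ≥ 0` (by continuity) and `f'' ≥ 2^e`, on `[ζ, c]` we have
`f' w ≥ 2^e (b - a) ≥ 2^(e+1) (c - ζ)`, so the errors `εᵢ = zᵢ - ζ` satisfy
`2 (c - ζ) εᵢ₊₁ ≤ εᵢ²`, which iterates to `εᵢ ≤ 2^(1 - 2^i) (c - ζ)`. -/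

open Set

section NewtonStep

variable {f : ℝ → ℝ} {K m x y : ℝ}

theorem deriv_mul_sub_le_sub_add_sq (hf : Differentiable ℝ f)
    (hf' : Differentiable ℝ (deriv f)) (hxy : x ≤ y)
    (hK : ∀ t ∈ Ioo x y, deriv (deriv f) t ≤ K) :
    deriv f y * (y - x) ≤ f y - f x + K / 2 * (y - x) ^ 2 := by
  have hlip : ∀ t ∈ Icc x y, deriv f y - deriv f t ≤ K * (y - t) := fun t ht =>
    (convex_Icc x y).image_sub_le_mul_sub_of_deriv_le hf'.continuous.continuousOn
      hf'.differentiableOn (by rwa [interior_Icc]) t ht y (right_mem_Icc.2 hxy) ht.2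
  set g : ℝ → ℝ := fun t => f t + deriv f y * (y - t) - K / 2 * (y - t) ^ 2
  have hg : ∀ t, HasDerivAt g (deriv f t - deriv f y + K * (y - t)) t := fun t => by
    have hyt := (hasDerivAt_id t).const_sub y
    refine (((hf t).hasDerivAt.add (hyt.const_mul (deriv f y))).sub
      ((hyt.pow 2).const_mul (K / 2))).congr_deriv ?_
    simp only [id, Nat.cast_ofNat]
    ring
  have hgmono : MonotoneOn g (Icc x y) :=
    monotoneOn_of_deriv_nonneg (convex_Icc x y)
      (fun t _ => (hg t).continuousAt.continuousWithinAt)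
      (fun t _ => (hg t).differentiableAt.differentiableWithinAt)
      (fun t ht => by
        rw [(hg t).deriv]
        linarith [hlip t (interior_subset ht)])
  have hgxy := hgmono (left_mem_Icc.2 hxy) (right_mem_Icc.2 hxy) hxy
  simp only [g, sub_self] at hgxy
  linarith

theorem newton_step_mem_Icc (hf : Differentiable ℝ f) (hfx : f x = 0) (hxy : x ≤ y)
    (hpos : ∀ t ∈ Ioc x y, 0 < deriv f t) (hmono : MonotoneOn (deriv f) (Icc x y)) :
    y - f y / deriv f y ∈ Icc x y := by
  rcases hxy.eq_or_lt with rfl | hlt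
  · simp [hfx]
  have hD : 0 < deriv f y := hpos y ⟨hlt, le_rfl⟩
  have hfy : f x ≤ f y :=
    monotoneOn_of_deriv_nonneg (convex_Icc x y) hf.continuous.continuousOn hf.differentiableOn
      (fun t ht => (hpos t (Ioo_subset_Ioc_self (by rwa [interior_Icc] at ht))).le)
      (left_mem_Icc.2 hxy) (right_mem_Icc.2 hxy) hxy
  have hslope : f y - f x ≤ deriv f y * (y - x) :=
    (convex_Icc x y).image_sub_le_mul_sub_of_deriv_le hf.continuous.continuousOn
      hf.differentiableOn
      (fun t ht => hmono (interior_subset ht) (right_mem_Icc.2 hxy) (interior_subset ht).2)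
      x (left_mem_Icc.2 hxy) y (right_mem_Icc.2 hxy) hxy
  rw [hfx] at hfy hslope
  constructor
  · have : f y / deriv f y ≤ y - x := (div_le_iff₀ hD).2 (by linarith)
    linarith
  · linarith [div_nonneg hfy hD.le]

theorem newton_iterate_mem_Icc (hf : Differentiable ℝ f) (hfx : f x = 0) (hxy : x ≤ y)
    (hpos : ∀ t ∈ Ioc x y, 0 < deriv f t) (hmono : MonotoneOn (deriv f) (Icc x y))
    {z : ℕ → ℝ} (hz0 : z 0 = y) (hziter : ∀ i, z (i + 1) = z i - f (z i) / deriv f (z i))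
    (i : ℕ) : z i ∈ Icc x y := by
  induction i with
  | zero =>
    rw [hz0]
    exact right_mem_Icc.2 hxy
  | succ i ih =>
    have hstep := newton_step_mem_Icc hf hfx ih.1
      (fun t ht => hpos t ⟨ht.1, ht.2.trans ih.2⟩) (hmono.mono (Icc_subset_Icc le_rfl ih.2))
    rw [hziter]
    exact ⟨hstep.1, hstep.2.trans ih.2⟩

theorem deriv_mul_newton_step_sub_le (hf : Differentiable ℝ f)
    (hf' : Differentiable ℝ (deriv f)) (hfx : f x = 0) (hxy : x ≤ y)
    (hK : ∀ t ∈ Ioo x y, deriv (deriv f) t ≤ K) (hD : deriv f y ≠ 0) :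
    deriv f y * (y - f y / deriv f y - x) ≤ K / 2 * (y - x) ^ 2 := by
  have := deriv_mul_sub_le_sub_add_sq hf hf' hxy hK
  rw [hfx] at this
  calc deriv f y * (y - f y / deriv f y - x) = deriv f y * (y - x) - f y := by
        field_simp
        ring
    _ ≤ K / 2 * (y - x) ^ 2 := by linarith

-- `f' x ≥ 0` holds at the endpoint `x` too, by continuity of `f'`.
theorem mul_sub_le_deriv (hf' : Differentiable ℝ (deriv f)) (hxy : x < y)
    (hpos : ∀ t ∈ Ioc x y, 0 < deriv f t) (hm : ∀ t ∈ Icc x y, m ≤ deriv (deriv f) t)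
    {w : ℝ} (hw : w ∈ Icc x y) : m * (w - x) ≤ deriv f w := by
  have hfx : 0 ≤ deriv f x :=
    (isClosed_le continuous_const hf'.continuous).closure_subset_iff.2 (fun t ht => (hpos t ht).le)
      (by rw [closure_Ioc hxy.ne]; exact left_mem_Icc.2 hxy.le)
  have := (convex_Icc x y).mul_sub_le_image_sub_of_le_deriv hf'.continuous.continuousOn
    hf'.differentiableOn (fun t ht => hm t (interior_subset ht)) x (left_mem_Icc.2 hxy.le) w hw hw.1
  linarith

end NewtonStep

theorem two_rpow_one_sub_two_pow_sq (i : ℕ) :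
    ((2 : ℝ) ^ (1 - 2 ^ i : ℝ)) ^ 2 = 2 * (2 : ℝ) ^ (1 - 2 ^ (i + 1) : ℝ) := by
  rw [← Real.rpow_natCast, ← Real.rpow_mul zero_le_two,
    show (1 - 2 ^ i : ℝ) * ((2 : ℕ) : ℝ) = 1 + (1 - 2 ^ (i + 1)) by push_cast; ring,
    Real.rpow_add two_pos, Real.rpow_one]

theorem le_two_rpow_mul_of_quadratic_recurrence {u : ℕ → ℝ} {R : ℝ}
    (hu : ∀ i, u i ∈ Icc 0 R) (hstep : ∀ i, 2 * R * u (i + 1) ≤ u i ^ 2) (i : ℕ) :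
    u i ≤ 2 ^ (1 - 2 ^ i : ℝ) * R := by
  induction i with
  | zero => simpa using (hu 0).2
  | succ i ih =>
    rcases ((hu 0).1.trans (hu 0).2).eq_or_lt with hR | hR
    · simpa [← hR] using (hu (i + 1)).2
    refine le_of_mul_le_mul_left ?_ (by positivity : 0 < 2 * R)
    calc 2 * R * u (i + 1) ≤ u i ^ 2 := hstep i
      _ ≤ (2 ^ (1 - 2 ^ i : ℝ) * R) ^ 2 := pow_le_pow_left₀ (hu i).1 ih 2
      _ = 2 * R * (2 ^ (1 - 2 ^ (i + 1) : ℝ) * R) := by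
        rw [mul_pow, two_rpow_one_sub_two_pow_sq]
        ring

theorem newton_approximate_zero_general
    (f : ℝ → ℝ) (hf : Differentiable ℝ f) (hf' : Differentiable ℝ (deriv f))
    (ζ : ℝ) (hζ : f ζ = 0)
    (a b c : ℝ) (hab : a < b)
    (h1 : c - b ≤ (b - a) / 2)
    (h2 : b ≤ ζ) (h2' : ζ ≤ c)
    (h3 : ∀ x ∈ Set.Ioc a c, 0 < deriv f x)
    (h4 : ∃ e : ℝ, ∀ x ∈ Set.Icc a c,
      (2 : ℝ) ^ e ≤ deriv (deriv f) x ∧ deriv (deriv f) x ≤ (2 : ℝ) ^ (e + 1))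
    (z : ℕ → ℝ) (hz0 : z 0 = c)
    (hziter : ∀ i : ℕ, z (i + 1) = z i - f (z i) / deriv f (z i)) :
    ∀ i : ℕ, deriv f (z i) ≠ 0 ∧
      |z i - ζ| ≤ (2 : ℝ) ^ ((1 : ℝ) - 2 ^ i) * |c - ζ| := by
  obtain ⟨e, he⟩ := h4
  have haζ : a < ζ := hab.trans_le h2
  have hac : a < c := haζ.trans_le h2'
  have hmono : MonotoneOn (deriv f) (Icc a c) :=
    monotoneOn_of_deriv_nonneg (convex_Icc a c) hf'.continuous.continuousOn
      hf'.differentiableOn fun x hx => (by positivity : (0 : ℝ) ≤ 2 ^ e).trans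
        (he x (interior_subset hx)).1
  have hD : ∀ w ∈ Icc ζ c, 2 ^ (e + 1) * (c - ζ) ≤ deriv f w := fun w hw => by
    have hlin := mul_sub_le_deriv hf' hac h3 (fun t ht => (he t ht).1)
      ⟨(haζ.trans_le hw.1).le, hw.2⟩
    have hgap : 2 * (c - ζ) ≤ w - a := by linarith [hw.1]
    rw [Real.rpow_add_one two_ne_zero]
    nlinarith [mul_le_mul_of_nonneg_left hgap (by positivity : (0 : ℝ) ≤ 2 ^ e)]
  have hz : ∀ i, z i ∈ Icc ζ c := newton_iterate_mem_Icc hf hζ h2'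
    (fun t ht => h3 t ⟨haζ.trans ht.1, ht.2⟩) (hmono.mono (Icc_subset_Icc haζ.le le_rfl))
    hz0 hziter
  have hpos : ∀ i, 0 < deriv f (z i) := fun i => h3 _ ⟨haζ.trans_le (hz i).1, (hz i).2⟩
  have hrec : ∀ i, 2 * (c - ζ) * (z (i + 1) - ζ) ≤ (z i - ζ) ^ 2 := fun i => by
    have hquad := deriv_mul_newton_step_sub_le hf hf' hζ (hz i).1
      (fun t ht => (he t ⟨(haζ.trans ht.1).le, ht.2.le.trans (hz i).2⟩).2) (hpos i).ne'
    rw [← hziter] at hquad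
    have hlower := mul_le_mul_of_nonneg_right (hD _ (hz i)) (sub_nonneg.2 (hz (i + 1)).1)
    refine le_of_mul_le_mul_left ?_ (by positivity : (0 : ℝ) < 2 ^ (e + 1) / 2)
    linarith
  intro i
  refine ⟨(hpos i).ne', ?_⟩
  rw [abs_of_nonneg (sub_nonneg.2 (hz i).1), abs_of_nonneg (sub_nonneg.2 h2')]
  exact le_two_rpow_mul_of_quadratic_recurrence
    (fun i => ⟨sub_nonneg.2 (hz i).1, sub_le_sub_right (hz i).2 ζ⟩) hrec i

/-- Let `f : ℝ → ℝ` be twice differentiable and `ζ` a zero of `f`.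
Let `a < b < c` satisfy `c - b ≤ (b - a)/2`, `b ≤ ζ ≤ c`, `f' > 0` on `(a, c]`, and
`2^e ≤ f'' ≤ 2^(e+1)` on `[a, c]` for some real `e`.  Then every Newton iterate
`z i` starting from `z 0 = c` is well defined (`deriv f (z i) ≠ 0`) and satisfies
`|z i - ζ| ≤ 2^(1 - 2^i) * |c - ζ|`. -/
theorem newton_approximate_zero
    (f : ℝ → ℝ) (hf : Differentiable ℝ f) (hf' : Differentiable ℝ (deriv f))
    (ζ : ℝ) (hζ : f ζ = 0)
    (a b c : ℝ) (hab : a < b) (hbc : b < c)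
    (h1 : c - b ≤ (b - a) / 2)
    (h2 : b ≤ ζ) (h2' : ζ ≤ c)
    (h3 : ∀ x ∈ Set.Ioc a c, 0 < deriv f x)
    (h4 : ∃ e : ℝ, ∀ x ∈ Set.Icc a c,
      (2 : ℝ) ^ e ≤ deriv (deriv f) x ∧ deriv (deriv f) x ≤ (2 : ℝ) ^ (e + 1))
    (z : ℕ → ℝ) (hz0 : z 0 = c)
    (hziter : ∀ i : ℕ, z (i + 1) = z i - f (z i) / deriv f (z i)) :
    ∀ i : ℕ, deriv f (z i) ≠ 0 ∧
      |z i - ζ| ≤ (2 : ℝ) ^ ((1 : ℝ) - 2 ^ i) * |c - ζ| :=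
  newton_approximate_zero_general f hf hf' ζ hζ a b c hab h1 h2 h2' h3 h4 z hz0 hziter
end

section
/- Let f : ℝ → ℝ be twice differentiable, let a < c and e be real numbers such that f′ is positive on (a, c] and 2^e ≤ f″(x) ≤ 2^{e+1} for all x ∈ [a, c]. Let ζ ∈ (a, c] satisfy f(ζ) = 0 and let z ∈ [ζ, c]. Then the Newton step z′ := z − f(z)/f′(z) satisfies ζ ≤ z′ ≤ z and z′ − ζ ≤ (z − ζ)²/(z − a). -/
/-!
For a convex increasing `f` with root `ζ ≤ z`, the Newton step stays in `[ζ, z]`, and its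
error is the Taylor remainder of `f` at `z` divided by `f' z`:
`z' - ζ = (f' z (z - ζ) - f z) / f' z ≤ (M / 2) (z - ζ)² / f' z` when `f'' ≤ M`.
With `M = 2^(e+1)` the numerator is `2^e (z - ζ)²`, while `f'' ≥ 2^e` and `f' a ≥ 0` give
`f' z ≥ 2^e (z - a)`; the factor `2^e` cancels.
-/

open Set

section ConvexBounds

variable {f : ℝ → ℝ} {x y : ℝ}

theorem deriv_mul_sub_le_image_sub_of_monotoneOn (hf : Differentiable ℝ f)
    (hmono : MonotoneOn (deriv f) (Icc x y)) (hxy : x ≤ y) :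
    deriv f x * (y - x) ≤ f y - f x :=
  (convex_Icc x y).mul_sub_le_image_sub_of_le_deriv hf.continuous.continuousOn
    hf.differentiableOn
    (fun _ ht => hmono (left_mem_Icc.2 hxy) (interior_subset ht) (interior_Icc.subset ht).1.le)
    x (left_mem_Icc.2 hxy) y (right_mem_Icc.2 hxy) hxy

theorem image_sub_le_deriv_mul_sub_of_monotoneOn (hf : Differentiable ℝ f)
    (hmono : MonotoneOn (deriv f) (Icc x y)) (hxy : x ≤ y) :
    f y - f x ≤ deriv f y * (y - x) :=
  (convex_Icc x y).image_sub_le_mul_sub_of_deriv_le hf.continuous.continuousOn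
    hf.differentiableOn
    (fun _ ht => hmono (interior_subset ht) (right_mem_Icc.2 hxy) (interior_Icc.subset ht).2.le)
    x (left_mem_Icc.2 hxy) y (right_mem_Icc.2 hxy) hxy

/-- Second-order Taylor bound at `y`. -/
theorem deriv_mul_sub_sub_image_sub_le {M : ℝ} (hf : Differentiable ℝ f)
    (hf' : Differentiable ℝ (deriv f)) (hM : ∀ t ∈ Ioo x y, deriv (deriv f) t ≤ M)
    (hxy : x ≤ y) :
    deriv f y * (y - x) - (f y - f x) ≤ M / 2 * (y - x) ^ 2 := by
  -- Since `f'' ≤ M`, `g` has the monotone derivative `M t - f' t`, so `g` is convex.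
  set g : ℝ → ℝ := fun t => M / 2 * t ^ 2 - f t
  have hg : ∀ t, HasDerivAt g (M * t - deriv f t) t := fun t => by
    refine (((hasDerivAt_pow 2 t).const_mul (M / 2)).fun_sub (hf t).hasDerivAt).congr_deriv ?_
    norm_num
    ring
  have hg_deriv : deriv g = fun t => M * t - deriv f t := funext fun t => (hg t).deriv
  have hmono : MonotoneOn (deriv g) (Icc x y) := fun s hs t ht hst => by
    have := (convex_Icc x y).image_sub_le_mul_sub_of_deriv_le hf'.continuous.continuousOn
      hf'.differentiableOn (by rwa [interior_Icc]) s hs t ht hst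
    simp only [hg_deriv]
    linarith
  have := image_sub_le_deriv_mul_sub_of_monotoneOn (fun t => (hg t).differentiableAt) hmono hxy
  rw [hg_deriv] at this
  linear_combination this

theorem mul_sub_le_deriv_of_le_deriv_deriv {a z m : ℝ} (hf' : Differentiable ℝ (deriv f))
    (hf'_nonneg : ∀ x ∈ Ioo a z, 0 ≤ deriv f x)
    (hm : ∀ t ∈ Ioo a z, m ≤ deriv (deriv f) t) (haz : a < z) :
    m * (z - a) ≤ deriv f z := by
  have hfa : 0 ≤ deriv f a := ge_of_tendsto hf'.continuous.continuousAt.continuousWithinAt <| by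
    filter_upwards [Ioo_mem_nhdsGT haz] with x hx using hf'_nonneg x hx
  have := (convex_Icc a z).mul_sub_le_image_sub_of_le_deriv hf'.continuous.continuousOn
    hf'.differentiableOn (by rwa [interior_Icc]) a (left_mem_Icc.2 haz.le) z
    (right_mem_Icc.2 haz.le) haz.le
  linarith

end ConvexBounds

section NewtonStep

variable {f : ℝ → ℝ} {ζ z M : ℝ}

theorem newton_step_mem_Icc_s1 (hf : Differentiable ℝ f) (hmono : MonotoneOn (deriv f) (Icc ζ z))
    (hζz : ζ ≤ z) (hζ : f ζ = 0) (hfζ : 0 ≤ deriv f ζ) (hfz : 0 < deriv f z) :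
    z - f z / deriv f z ∈ Icc ζ z := by
  have hlow := deriv_mul_sub_le_image_sub_of_monotoneOn hf hmono hζz
  have hup := image_sub_le_deriv_mul_sub_of_monotoneOn hf hmono hζz
  rw [hζ, sub_zero] at hlow hup
  constructor
  · rw [le_sub_comm, div_le_iff₀ hfz]
    linarith
  · exact sub_le_self _ (div_nonneg ((mul_nonneg hfζ (sub_nonneg.2 hζz)).trans hlow) hfz.le)

theorem newton_step_sub_le (hf : Differentiable ℝ f) (hf' : Differentiable ℝ (deriv f))
    (hM : ∀ t ∈ Ioo ζ z, deriv (deriv f) t ≤ M) (hζz : ζ ≤ z) (hζ : f ζ = 0)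
    (hfz : 0 < deriv f z) :
    z - f z / deriv f z - ζ ≤ M / 2 * (z - ζ) ^ 2 / deriv f z := by
  have h := deriv_mul_sub_sub_image_sub_le hf hf' hM hζz
  rw [hζ, sub_zero] at h
  calc z - f z / deriv f z - ζ = (deriv f z * (z - ζ) - f z) / deriv f z := by
        field_simp
        ring
    _ ≤ M / 2 * (z - ζ) ^ 2 / deriv f z := by gcongr

end NewtonStep

theorem newton_step_estimate_general
    (f : ℝ → ℝ) (hf : Differentiable ℝ f) (hf' : Differentiable ℝ (deriv f))
    (a c e : ℝ)
    (hpos : ∀ x ∈ Set.Ioc a c, 0 < deriv f x)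
    (hsecond : ∀ x ∈ Set.Icc a c,
      (2 : ℝ) ^ e ≤ deriv (deriv f) x ∧ deriv (deriv f) x ≤ (2 : ℝ) ^ (e + 1))
    (ζ : ℝ) (hζmem : ζ ∈ Set.Ioc a c) (hζ : f ζ = 0)
    (z : ℝ) (hz : z ∈ Set.Icc ζ c)
    (z' : ℝ) (hz' : z' = z - f z / deriv f z) :
    ζ ≤ z' ∧ z' ≤ z ∧ z' - ζ ≤ (z - ζ) ^ 2 / (z - a) := by
  obtain ⟨haζ, hζc⟩ := hζmem
  obtain ⟨hζz, hzc⟩ := hz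
  have haz : a < z := haζ.trans_le hζz
  set m : ℝ := 2 ^ e
  have hm : 0 < m := by positivity
  have hbounds : ∀ t ∈ Ioo a z, m ≤ deriv (deriv f) t ∧ deriv (deriv f) t ≤ 2 * m :=
    fun t ht => by
      simpa [m, Real.rpow_add_one, mul_comm] using hsecond t ⟨ht.1.le, ht.2.le.trans hzc⟩
  have hζz_sub : Ioo ζ z ⊆ Ioo a z := Ioo_subset_Ioo_left haζ.le
  have hfz : 0 < deriv f z := hpos z ⟨haz, hzc⟩
  have hfz_ge : m * (z - a) ≤ deriv f z :=
    mul_sub_le_deriv_of_le_deriv_deriv hf' (fun x hx => (hpos x ⟨hx.1, hx.2.le.trans hzc⟩).le)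
      (fun t ht => (hbounds t ht).1) haz
  have hmono : MonotoneOn (deriv f) (Icc ζ z) :=
    monotoneOn_of_deriv_nonneg (convex_Icc ζ z) hf'.continuous.continuousOn hf'.differentiableOn
      fun t ht => hm.le.trans (hbounds t (hζz_sub (interior_Icc.subset ht))).1
  subst hz'
  obtain ⟨hlow, hup⟩ := newton_step_mem_Icc_s1 hf hmono hζz hζ (hpos ζ ⟨haζ, hζc⟩).le hfz
  refine ⟨hlow, hup, (newton_step_sub_le hf hf' (fun t ht => (hbounds t (hζz_sub ht)).2) hζz hζ
    hfz).trans ?_⟩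
  calc 2 * m / 2 * (z - ζ) ^ 2 / deriv f z ≤ m * (z - ζ) ^ 2 / (m * (z - a)) := by
        rw [mul_div_cancel_left₀ _ two_ne_zero]
        gcongr
    _ = (z - ζ) ^ 2 / (z - a) := mul_div_mul_left _ _ hm.ne'

/-- Under the stated hypotheses on `f`, `a`, `c`, `e`, a zero
`ζ ∈ (a, c]` and a point `z ∈ [ζ, c]`, the Newton step `z' = z - f z / f' z`
satisfies `ζ ≤ z' ≤ z` and `z' - ζ ≤ (z - ζ)² / (z - a)`. -/
theorem newton_step_estimate
    (f : ℝ → ℝ) (hf : Differentiable ℝ f) (hf' : Differentiable ℝ (deriv f))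
    (a c e : ℝ) (hac : a < c)
    (hpos : ∀ x ∈ Set.Ioc a c, 0 < deriv f x)
    (hsecond : ∀ x ∈ Set.Icc a c,
      (2 : ℝ) ^ e ≤ deriv (deriv f) x ∧ deriv (deriv f) x ≤ (2 : ℝ) ^ (e + 1))
    (ζ : ℝ) (hζmem : ζ ∈ Set.Ioc a c) (hζ : f ζ = 0)
    (z : ℝ) (hz : z ∈ Set.Icc ζ c)
    (z' : ℝ) (hz' : z' = z - f z / deriv f z) :
    ζ ≤ z' ∧ z' ≤ z ∧ z' - ζ ≤ (z - ζ) ^ 2 / (z - a) :=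
  newton_step_estimate_general f hf hf' a c e hpos hsecond ζ hζmem hζ z hz z' hz'
end

section
/- Let X be a metric space, f : X → ℝ, and x ∈ X such that the set S(x) = {ρ ∈ (0,1] : f is (1/ρ)-Lipschitz on the open ball of radius ρ centered at x} is nonempty. Then the supremum of S(x) belongs to S(x); that is, the supremum is attained, so f is (1/sup S(x))-Lipschitz on the open ball of radius sup S(x) centered at x. -/
/-- Let `X` be a metric space, `f : X → ℝ`, `x ∈ X`, and let
`S = {ρ ∈ (0,1] : f is (1/ρ)-Lipschitz on the open ball of radius ρ around x}`.
If `S` is nonempty, then `sSup S ∈ S`, i.e. the supremum is attained. -/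
theorem lipschitz_radius_sup_mem
    {X : Type*} [MetricSpace X] (f : X → ℝ) (x : X)
    (S : Set ℝ)
    (hS : S = {ρ : ℝ | ρ ∈ Set.Ioc (0 : ℝ) 1 ∧
      ∀ y ∈ Metric.ball x ρ, ∀ z ∈ Metric.ball x ρ,
        |f y - f z| ≤ (1 / ρ) * dist y z})
    (hne : S.Nonempty) :
    sSup S ∈ S := by
  subst hS
  have hbdd : BddAbove {ρ : ℝ | ρ ∈ Set.Ioc (0 : ℝ) 1 ∧
      ∀ y ∈ Metric.ball x ρ, ∀ z ∈ Metric.ball x ρ,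
        |f y - f z| ≤ (1 / ρ) * dist y z} := ⟨1, fun ρ hρ => hρ.1.2⟩
  set S := {ρ : ℝ | ρ ∈ Set.Ioc (0 : ℝ) 1 ∧
      ∀ y ∈ Metric.ball x ρ, ∀ z ∈ Metric.ball x ρ,
        |f y - f z| ≤ (1 / ρ) * dist y z} with hSdef
  set σ := sSup S with hσ
  obtain ⟨ρ₀, hρ₀⟩ := hne
  have hρ₀σ : ρ₀ ≤ σ := le_csSup hbdd hρ₀
  have hσpos : 0 < σ := lt_of_lt_of_le hρ₀.1.1 hρ₀σ
  have hσle : σ ≤ 1 := csSup_le ⟨ρ₀, hρ₀⟩ fun ρ hρ => hρ.1.2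
  refine ⟨⟨hσpos, hσle⟩, fun y hy z hz => ?_⟩
  simp only [Metric.mem_ball] at hy hz
  rcases eq_or_lt_of_le (abs_nonneg (f y - f z)) with hc | hc
  · calc |f y - f z| = 0 := hc.symm
    _ ≤ (1 / σ) * dist y z := by positivity
  · -- |f y - f z| > 0
    set c := |f y - f z| with hcdef
    have hm : max (dist y x) (dist z x) < σ := max_lt hy hz
    have key : σ ≤ max (max (dist y x) (dist z x)) (dist y z / c) := by
      apply csSup_le ⟨ρ₀, hρ₀⟩
      intro ρ hρ
      rcases le_or_gt ρ (max (dist y x) (dist z x)) with h | h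
      · exact le_trans h (le_max_left _ _)
      · have hyρ : y ∈ Metric.ball x ρ := by
          simp only [Metric.mem_ball]
          exact lt_of_le_of_lt (le_max_left _ _) h
        have hzρ : z ∈ Metric.ball x ρ := by
          simp only [Metric.mem_ball]
          exact lt_of_le_of_lt (le_max_right _ _) h
        have := hρ.2 y hyρ z hzρ
        have hρpos : 0 < ρ := hρ.1.1
        have : ρ * c ≤ dist y z := by
          rw [one_div] at this
          calc ρ * c ≤ ρ * (ρ⁻¹ * dist y z) := by
                exact mul_le_mul_of_nonneg_left this hρpos.le
          _ = dist y z := by field_simp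
        have : ρ ≤ dist y z / c := (le_div_iff₀ hc).mpr this
        exact le_trans this (le_max_right _ _)
    have hσd : σ ≤ dist y z / c := by
      rcases max_cases (max (dist y x) (dist z x)) (dist y z / c) with ⟨he, _⟩ | ⟨he, _⟩
      · rw [he] at key; exact absurd (lt_of_le_of_lt key hm) (lt_irrefl _)
      · rwa [he] at key
    have : σ * c ≤ dist y z := (le_div_iff₀ hc).mp hσd
    rw [one_div]
    calc c = σ⁻¹ * (σ * c) := by field_simp
    _ ≤ σ⁻¹ * dist y z := by
        exact mul_le_mul_of_nonneg_left this (inv_nonneg.mpr hσpos.le)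
end

section
/- Let X be a metric space, f : X → ℝ, let U = {x ∈ X : S(x) ≠ ∅}, and for x ∈ U define α(x) = sup S(x). Then for all x₀ ∈ U and x₁ ∈ X with dist(x₀, x₁) < α(x₀): the point x₁ belongs to U and α(x₁) ≥ α(x₀) − dist(x₀, x₁). Consequently U is an open subset of X and α : U → (0,1] is 1-Lipschitz on U. -/
/-- With `S x` the set of radii `ρ ∈ (0,1]` such that `f` is
`(1/ρ)`-Lipschitz on the open ball of radius `ρ` around `x`, let
`U = {x : S x ≠ ∅}` and `α x = sSup (S x)` for `x ∈ U`.  Then for `x₀ ∈ U` and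
`x₁` with `dist x₀ x₁ < α x₀` we have `x₁ ∈ U` and `α x₁ ≥ α x₀ - dist x₀ x₁`;
consequently `U` is open, `α` takes values in `(0,1]` on `U`, and `α` is
`1`-Lipschitz on `U`. -/
theorem lipschitz_radius_one_lipschitz
    {X : Type*} [MetricSpace X] (f : X → ℝ)
    (S : X → Set ℝ)
    (hS : ∀ x : X, S x = {ρ : ℝ | ρ ∈ Set.Ioc (0 : ℝ) 1 ∧
      ∀ y ∈ Metric.ball x ρ, ∀ z ∈ Metric.ball x ρ,
        |f y - f z| ≤ (1 / ρ) * dist y z})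
    (U : Set X) (hU : U = {x : X | (S x).Nonempty})
    (α : X → ℝ) (hα : ∀ x : X, α x = sSup (S x)) :
    (∀ x₀ ∈ U, ∀ x₁ : X, dist x₀ x₁ < α x₀ →
        x₁ ∈ U ∧ α x₀ - dist x₀ x₁ ≤ α x₁) ∧
    IsOpen U ∧
    (∀ x ∈ U, α x ∈ Set.Ioc (0 : ℝ) 1) ∧
    (∀ x₀ ∈ U, ∀ x₁ ∈ U, |α x₀ - α x₁| ≤ dist x₀ x₁) := by
  have hS_sub : ∀ x, S x ⊆ Set.Ioc (0 : ℝ) 1 := by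
    intro x ρ hρ; rw [hS] at hρ; exact hρ.1
  have hbdd : ∀ x, BddAbove (S x) := fun x => ⟨1, fun ρ hρ => (hS_sub x hρ).2⟩
  have hα_pos : ∀ x ∈ U, 0 < α x := by
    intro x hx; rw [hU] at hx; obtain ⟨ρ, hρ⟩ := hx
    have h := le_csSup (hbdd x) hρ
    rw [hα]; exact lt_of_lt_of_le (hS_sub x hρ).1 h
  have hα_le : ∀ x ∈ U, α x ≤ 1 := by
    intro x hx; rw [hU] at hx; rw [hα]
    exact csSup_le hx fun ρ hρ => (hS_sub x hρ).2
  have key : ∀ x₀ x₁ : X, ∀ ρ ∈ S x₀, dist x₀ x₁ < ρ → ρ - dist x₀ x₁ ∈ S x₁ := by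
    intro x₀ x₁ ρ hρ hd
    rw [hS] at hρ ⊢
    obtain ⟨⟨hρ0, hρ1⟩, hlip⟩ := hρ
    have hd0 : 0 ≤ dist x₀ x₁ := dist_nonneg
    refine ⟨⟨by linarith, by linarith⟩, ?_⟩
    have hsub : Metric.ball x₁ (ρ - dist x₀ x₁) ⊆ Metric.ball x₀ ρ := by
      intro w hw
      rw [Metric.mem_ball] at hw ⊢
      calc dist w x₀ ≤ dist w x₁ + dist x₁ x₀ := dist_triangle _ _ _
        _ < (ρ - dist x₀ x₁) + dist x₀ x₁ := by rw [dist_comm x₁ x₀]; linarith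
        _ = ρ := by ring
    intro y hy z hz
    have h1 : (1 : ℝ) / ρ ≤ 1 / (ρ - dist x₀ x₁) :=
      one_div_le_one_div_of_le (by linarith) (by linarith)
    calc |f y - f z| ≤ (1 / ρ) * dist y z := hlip y (hsub hy) z (hsub hz)
      _ ≤ (1 / (ρ - dist x₀ x₁)) * dist y z :=
        mul_le_mul_of_nonneg_right h1 dist_nonneg
  have main : ∀ x₀ ∈ U, ∀ x₁ : X, dist x₀ x₁ < α x₀ →
      x₁ ∈ U ∧ α x₀ - dist x₀ x₁ ≤ α x₁ := by
    intro x₀ hx₀ x₁ hd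
    have hne : (S x₀).Nonempty := by rw [hU] at hx₀; exact hx₀
    obtain ⟨ρ, hρ, hρd⟩ := exists_lt_of_lt_csSup hne (by rw [hα] at hd; exact hd)
    have hmem := key x₀ x₁ ρ hρ hρd
    have hx₁U : x₁ ∈ U := by rw [hU]; exact ⟨_, hmem⟩
    refine ⟨hx₁U, ?_⟩
    have hub : ∀ σ ∈ S x₀, σ ≤ α x₁ + dist x₀ x₁ := by
      intro σ hσ
      by_cases h : dist x₀ x₁ < σ
      · have h2 := le_csSup (hbdd x₁) (key x₀ x₁ σ hσ h)
        rw [← hα] at h2; linarith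
      · push_neg at h
        have := hα_pos x₁ hx₁U; linarith
    have h3 : α x₀ ≤ α x₁ + dist x₀ x₁ := by
      rw [hα x₀]; exact csSup_le hne hub
    linarith
  have oneside : ∀ a ∈ U, ∀ b ∈ U, α a - α b ≤ dist a b := by
    intro a ha b hb
    by_cases h : dist a b < α a
    · have := (main a ha b h).2; linarith
    · push_neg at h
      have := hα_pos b hb; linarith
  refine ⟨main, ?_, fun x hx => ⟨hα_pos x hx, hα_le x hx⟩, ?_⟩
  · rw [Metric.isOpen_iff]
    intro x hx
    refine ⟨α x, hα_pos x hx, fun y hy => ?_⟩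
    rw [Metric.mem_ball] at hy
    exact (main x hx y (by rw [dist_comm]; exact hy)).1
  · intro x₀ hx₀ x₁ hx₁
    rw [abs_sub_le_iff]
    exact ⟨oneside x₀ hx₀ x₁ hx₁, by rw [dist_comm]; exact oneside x₁ hx₁ x₀ hx₀⟩
end

section
/- Let p be a real polynomial of degree d ≥ 2 and let α be a nonzero real number. Let q = Δ_α^{d−2}[p] be the (d−2)-th iterate of the first difference operator applied to p. Then the polynomial q(2X) − 2·q(X) + q(0) equals c·X², where c = d! · α^{d−2} · (leading coefficient of p); in particular c ≠ 0. -/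
open Polynomial

lemma step_delta (α : ℝ) (m : ℕ) (hm : 1 ≤ m) (r : Polynomial ℝ) (hr : r.natDegree ≤ m) :
    (r.comp (X + C α) - r).natDegree ≤ m - 1 ∧
    (r.comp (X + C α) - r).coeff (m - 1) = m * α * r.coeff m := by
  have htay : r.comp (X + C α) = taylor α r := (taylor_apply α r).symm
  have hconst : ∀ j, m ≤ j → hasseDeriv j r = C (r.coeff j) := by
    intro j hj
    have h0 : (hasseDeriv j r).natDegree ≤ 0 := le_trans (natDegree_hasseDeriv_le r j) (by omega)
    rw [eq_C_of_natDegree_le_zero h0, hasseDeriv_coeff]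
    simp
  constructor
  · apply natDegree_le_iff_coeff_eq_zero.2
    intro j hj
    have hjm : m ≤ j := by omega
    rw [coeff_sub, htay, taylor_coeff, hconst j hjm, eval_C, sub_self]
  · have h1 : (hasseDeriv (m - 1) r).natDegree < 2 :=
      lt_of_le_of_lt (natDegree_hasseDeriv_le r (m - 1)) (by omega)
    rw [coeff_sub, htay, taylor_coeff, eval_eq_sum_range' h1]
    have hc0 : (hasseDeriv (m - 1) r).coeff 0 = r.coeff (m - 1) := by
      rw [hasseDeriv_coeff]; simp
    have hc1 : (hasseDeriv (m - 1) r).coeff 1 = m * r.coeff m := by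
      rw [hasseDeriv_coeff]
      obtain ⟨t, rfl⟩ : ∃ t, m = t + 1 := ⟨m - 1, by omega⟩
      simp [Nat.add_sub_cancel, Nat.succ_sub_one, Nat.add_comm 1 t, Nat.choose_succ_self_right]
    rw [Finset.sum_range_succ, Finset.sum_range_one, hc0, hc1]
    ring

lemma iter_delta (α : ℝ) : ∀ (k n : ℕ) (r : Polynomial ℝ), k ≤ n → r.natDegree ≤ n →
    ((fun s : Polynomial ℝ => s.comp (X + C α) - s)^[k] r).natDegree ≤ n - k ∧
    ((fun s : Polynomial ℝ => s.comp (X + C α) - s)^[k] r).coeff (n - k)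
      = (n.descFactorial k : ℝ) * α ^ k * r.coeff n := by
  intro k
  induction k with
  | zero => intro n r _ hr; simpa using hr
  | succ k ih =>
    intro n r hk hr
    obtain ⟨t, rfl⟩ : ∃ t, n = t + 1 := ⟨n - 1, by omega⟩
    obtain ⟨hs1, hs2⟩ := step_delta α (t + 1) (by omega) r hr
    rw [Function.iterate_succ_apply]
    obtain ⟨hi1, hi2⟩ := ih t (r.comp (X + C α) - r) (by omega) (by simpa using hs1)
    refine ⟨by simpa [Nat.succ_sub_succ] using hi1, ?_⟩
    rw [Nat.succ_sub_succ, hi2]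
    simp only [Nat.add_sub_cancel] at hs2
    rw [hs2, Nat.succ_descFactorial_succ]
    push_cast
    ring

lemma quad_form (q : Polynomial ℝ) (h : q.natDegree ≤ 2) :
    q = C (q.coeff 2) * X ^ 2 + C (q.coeff 1) * X + C (q.coeff 0) := by
  ext n
  match n with
  | 0 => simp
  | 1 => simp [coeff_X_pow]
  | 2 => simp [coeff_X_pow]
  | (n + 3) =>
    rw [coeff_eq_zero_of_natDegree_lt (by omega)]
    simp [coeff_X_pow, coeff_X]

/-- Let `p` be a real polynomial of degree `d ≥ 2` and `α ≠ 0`.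
With `q = Δ_α^[d-2] p` the `(d-2)`-th iterate of the first difference operator
`Δ_α[r](X) = r(X + α) - r(X)`, the polynomial `q(2X) - 2·q(X) + q(0)` equals
`c·X²` where `c = d! · α^(d-2) · leadingCoeff p ≠ 0`. -/
theorem iterated_difference_square
    (p : Polynomial ℝ) (d : ℕ) (hd : p.natDegree = d) (hd2 : 2 ≤ d)
    (α : ℝ) (hα : α ≠ 0)
    (Δ : Polynomial ℝ → Polynomial ℝ)
    (hΔ : ∀ r : Polynomial ℝ, Δ r = r.comp (Polynomial.X + Polynomial.C α) - r)
    (q : Polynomial ℝ) (hq : q = Δ^[d - 2] p) :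
    q.comp (Polynomial.C 2 * Polynomial.X) - Polynomial.C 2 * q
        + Polynomial.C (q.eval 0)
      = Polynomial.C ((d.factorial : ℝ) * α ^ (d - 2) * p.leadingCoeff)
        * Polynomial.X ^ 2 ∧
    (d.factorial : ℝ) * α ^ (d - 2) * p.leadingCoeff ≠ 0 := by
  have hΔfun : Δ = fun s : Polynomial ℝ => s.comp (X + C α) - s := funext hΔ
  rw [hΔfun] at hq
  obtain ⟨h1, h2⟩ := iter_delta α (d - 2) d p (by omega) (by omega)
  rw [← hq] at h1 h2
  have hdd : d - (d - 2) = 2 := by omega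
  rw [hdd] at h1 h2
  have hlc : p.coeff d = p.leadingCoeff := by rw [leadingCoeff, hd]
  have hfact : ((d.descFactorial (d - 2) : ℝ)) * 2 = (d.factorial : ℝ) := by
    have := Nat.factorial_mul_descFactorial (show d - 2 ≤ d by omega)
    rw [hdd] at this
    have : 2 * d.descFactorial (d - 2) = d.factorial := by
      simpa [Nat.factorial] using this
    push_cast [← this]
    ring
  have hlcne : p.leadingCoeff ≠ 0 := by
    intro h
    have := leadingCoeff_eq_zero.mp h
    rw [this] at hd
    simp at hd
    omega
  have hcne : (d.factorial : ℝ) * α ^ (d - 2) * p.leadingCoeff ≠ 0 := by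
    apply mul_ne_zero (mul_ne_zero _ (pow_ne_zero _ hα)) hlcne
    exact_mod_cast Nat.factorial_ne_zero d
  refine ⟨?_, hcne⟩
  set a := q.coeff 2
  set b := q.coeff 1
  set c0 := q.coeff 0
  have hqf : q = C a * X ^ 2 + C b * X + C c0 := quad_form q h1
  have ha : 2 * a = (d.factorial : ℝ) * α ^ (d - 2) * p.leadingCoeff := by
    rw [h2, hlc, ← hfact]
    ring
  have hC2 : (C (2 : ℝ)) = (2 : Polynomial ℝ) := by
    rw [← map_ofNat (C : ℝ →+* Polynomial ℝ) 2]
  rw [← ha, hqf]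
  simp only [eval_add, eval_mul, eval_C, eval_X, eval_pow, add_comp, mul_comp, C_comp, X_comp,
    pow_two, mul_mul_mul_comm, hC2, map_mul]
  ring_nf
end

section
/- Let α, β be real numbers with β > 0 and 2β ≤ α. Let f : ℝ → ℝ satisfy |f(x) − α·x²| ≤ |x|³ for all x ∈ [−β, β]. Let k be a real number with 0 < k ≤ min(1/(3α), β/2). Then for every natural number i, the i-th iterate of f at k satisfies 0 < f^[i](k) ≤ k · 2^{1−2^i}, and in particular f^[i](k) ≤ β · 2^{−2^i}. -/
/-- Let `β > 0`, `2β ≤ α`, and `|f x - α x²| ≤ |x|³` on `[-β, β]`.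
If `0 < k ≤ min (1/(3α)) (β/2)`, then for every `i` the iterate `f^[i] k`
satisfies `0 < f^[i] k ≤ k · 2^(1 - 2^i)`, and in particular
`f^[i] k ≤ β · 2^(-2^i)`. -/
theorem iterates_shrink_doubly_exponentially
    (α β : ℝ) (hβ : 0 < β) (hαβ : 2 * β ≤ α)
    (f : ℝ → ℝ)
    (hf : ∀ x ∈ Set.Icc (-β) β, |f x - α * x ^ 2| ≤ |x| ^ 3)
    (k : ℝ) (hk0 : 0 < k) (hk : k ≤ min (1 / (3 * α)) (β / 2)) :
    ∀ i : ℕ, 0 < f^[i] k ∧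
      f^[i] k ≤ k * (2 : ℝ) ^ ((1 : ℝ) - 2 ^ i) ∧
      f^[i] k ≤ β * (2 : ℝ) ^ (-(2 : ℝ) ^ i) := by
  have hα : 0 < α := lt_of_lt_of_le (by linarith) hαβ
  have hk1 : k ≤ 1 / (3 * α) := le_trans hk (min_le_left _ _)
  have hk2 : k ≤ β / 2 := le_trans hk (min_le_right _ _)
  have hk3 : 3 * α * k ≤ 1 := by
    rw [le_div_iff₀ (by positivity)] at hk1
    linarith
  -- main claim: first two parts, plus derive third
  have main : ∀ i : ℕ, 0 < f^[i] k ∧ f^[i] k ≤ k * (2 : ℝ) ^ ((1 : ℝ) - 2 ^ i) := by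
    intro i
    induction i with
    | zero =>
      refine ⟨by simpa using hk0, ?_⟩
      simp only [Function.iterate_zero, id_eq, pow_zero, sub_self, Real.rpow_zero, mul_one]
      norm_num
    | succ i ih =>
      obtain ⟨hx0, hxle⟩ := ih
      set x := f^[i] k with hxdef
      have hPpos : (0:ℝ) < (2 : ℝ) ^ ((1 : ℝ) - 2 ^ i) := Real.rpow_pos_of_pos two_pos _
      have hP1 : (2 : ℝ) ^ ((1 : ℝ) - 2 ^ i) ≤ 1 := by
        apply Real.rpow_le_one_of_one_le_of_nonpos (by norm_num)
        have : (1:ℝ) ≤ 2 ^ i := one_le_pow₀ (by norm_num)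
        linarith
      have hxk : x ≤ k := le_trans hxle (by nlinarith)
      have hxβ : x ≤ β := by linarith
      have hmem : x ∈ Set.Icc (-β) β := ⟨by linarith, hxβ⟩
      have habs := hf x hmem
      have haxx : |x| = x := abs_of_pos hx0
      rw [haxx] at habs
      rw [abs_le] at habs
      have hfx_lb : α * x ^ 2 - x ^ 3 ≤ f x := by linarith [habs.1]
      have hfx_ub : f x ≤ α * x ^ 2 + x ^ 3 := by linarith [habs.2]
      have hit : f^[i+1] k = f x := by rw [Function.iterate_succ_apply']
      constructor
      · rw [hit]
        have : 0 < α * x ^ 2 - x ^ 3 := by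
          nlinarith [mul_pos (mul_pos hx0 hx0) (show 0 < α - x by linarith)]
        linarith
      · rw [hit]
        -- f x ≤ x^2 * (α + x) ≤ (3α/2) x^2 ≤ (3α/2) (k P)^2 = (3αk/2) k P^2 ≤ k P^2/2 = k 2^(1-2^(i+1))
        have hQ : (2 : ℝ) ^ ((1 : ℝ) - 2 ^ (i+1)) * 2
            = (2 : ℝ) ^ ((1 : ℝ) - 2 ^ i) * (2 : ℝ) ^ ((1 : ℝ) - 2 ^ i) := by
          rw [← Real.rpow_add two_pos]
          have h2 : ((1:ℝ) - 2 ^ (i+1)) + 1 = ((1:ℝ) - 2 ^ i) + ((1:ℝ) - 2 ^ i) := by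
            rw [pow_succ]; ring
          rw [← h2, Real.rpow_add two_pos, Real.rpow_one]
        have hx2 : x ^ 2 ≤ (k * (2 : ℝ) ^ ((1 : ℝ) - 2 ^ i)) ^ 2 := by
          apply pow_le_pow_left₀ hx0.le hxle
        have hstep : f x ≤ (3 * α / 2) * x ^ 2 := by nlinarith
        have h2 : (3 * α / 2) * x ^ 2 ≤ (3 * α / 2) * (k * (2 : ℝ) ^ ((1 : ℝ) - 2 ^ i)) ^ 2 := by
          apply mul_le_mul_of_nonneg_left hx2 (by positivity)
        calc f x ≤ (3 * α / 2) * (k * (2 : ℝ) ^ ((1 : ℝ) - 2 ^ i)) ^ 2 := le_trans hstep h2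
          _ = (3 * α * k / 2) * k * ((2 : ℝ) ^ ((1 : ℝ) - 2 ^ i) * (2 : ℝ) ^ ((1 : ℝ) - 2 ^ i)) := by ring
          _ = (3 * α * k / 2) * k * ((2 : ℝ) ^ ((1 : ℝ) - 2 ^ (i+1)) * 2) := by rw [hQ]
          _ = (3 * α * k) * (k * (2 : ℝ) ^ ((1 : ℝ) - 2 ^ (i+1))) := by ring
          _ ≤ 1 * (k * (2 : ℝ) ^ ((1 : ℝ) - 2 ^ (i+1))) := by
              apply mul_le_mul_of_nonneg_right hk3
              positivity
          _ = k * (2 : ℝ) ^ ((1 : ℝ) - 2 ^ (i+1)) := by ring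
  intro i
  obtain ⟨h1, h2⟩ := main i
  refine ⟨h1, h2, ?_⟩
  have hE : (2 : ℝ) ^ ((1 : ℝ) - 2 ^ i) = 2 * (2 : ℝ) ^ (-(2 : ℝ) ^ i) := by
    rw [show ((1:ℝ) - 2 ^ i) = 1 + (-(2:ℝ)^i) by ring, Real.rpow_add two_pos, Real.rpow_one]
  have hpos : (0:ℝ) < (2 : ℝ) ^ (-(2 : ℝ) ^ i) := Real.rpow_pos_of_pos two_pos _
  calc f^[i] k ≤ k * (2 : ℝ) ^ ((1 : ℝ) - 2 ^ i) := h2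
    _ = (2 * k) * (2 : ℝ) ^ (-(2 : ℝ) ^ i) := by rw [hE]; ring
    _ ≤ β * (2 : ℝ) ^ (-(2 : ℝ) ^ i) := by
        apply mul_le_mul_of_nonneg_right (by linarith) hpos.le
end

section
/- Let α, β be real numbers with β > 0 and 2β ≤ α, and let f : ℝ → ℝ satisfy |f(x) − α·x²| ≤ |x|³ for all x ∈ [−β, β]. Let m be an integer, let u be a real number with 0 < u and (|m|+1)·u ≤ β, and let e be a real number with 4(|m|+1)³·u < e ≤ α. Set ε = (e − 4(|m|+1)³·u)/(4|m|+2). Then for every real z with |z − m·u| < ε·u/α one has |f(z) − m²·f(u)| < e·f(u)/α. -/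
set_option maxHeartbeats 1000000

/-- Let `β > 0`, `2β ≤ α`, and `|f x - α x²| ≤ |x|³` on `[-β, β]`.
Let `m` be an integer, `u > 0` with `(|m|+1)·u ≤ β`, and let `e` satisfy
`4(|m|+1)³·u < e ≤ α`.  Set `ε = (e - 4(|m|+1)³·u)/(4|m|+2)`.  Then for every
real `z` with `|z - m·u| < ε·u/α` one has `|f z - m²·f u| < e·f u/α`. -/
theorem approximation_step_square_gate
    (α β : ℝ) (hβ : 0 < β) (hαβ : 2 * β ≤ α)
    (f : ℝ → ℝ)
    (hf : ∀ x ∈ Set.Icc (-β) β, |f x - α * x ^ 2| ≤ |x| ^ 3)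
    (m : ℤ) (u : ℝ) (hu : 0 < u)
    (hmu : (|(m : ℝ)| + 1) * u ≤ β)
    (e : ℝ) (he1 : 4 * (|(m : ℝ)| + 1) ^ 3 * u < e) (he2 : e ≤ α)
    (ε : ℝ) (hε : ε = (e - 4 * (|(m : ℝ)| + 1) ^ 3 * u) / (4 * |(m : ℝ)| + 2)) :
    ∀ z : ℝ, |z - (m : ℝ) * u| < ε * u / α →
      |f z - (m : ℝ) ^ 2 * f u| < e * f u / α := by
  intro z hz
  set M := |(m : ℝ)| with hM
  have hM0 : 0 ≤ M := abs_nonneg _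
  have hα : 0 < α := lt_of_lt_of_le (by linarith) hαβ
  have hc : 0 < 4 * (M + 1) ^ 3 * u := by positivity
  have he0 : 0 < e := lt_trans hc he1
  have hε0 : 0 < ε := by
    rw [hε]; apply div_pos (by linarith) (by linarith)
  have hεe : ε * (4 * M + 2) = e - 4 * (M + 1) ^ 3 * u := by
    rw [hε]; field_simp
  have hεα : ε ≤ α := by nlinarith
  -- δ bound
  have hδu : ε * u / α ≤ u := by
    rw [div_le_iff₀ hα]; nlinarith
  have hδ : |z - (m : ℝ) * u| ≤ ε * u / α := le_of_lt hz
  have hmuabs : |(m : ℝ) * u| = M * u := by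
    rw [abs_mul, abs_of_pos hu]
  -- |z| ≤ (M+1)u
  have hzb : |z| ≤ (M + 1) * u := by
    have h1 : |z| ≤ |z - (m : ℝ) * u| + |(m : ℝ) * u| := by
      calc |z| = |(z - (m : ℝ) * u) + (m : ℝ) * u| := by ring_nf
        _ ≤ _ := abs_add_le _ _
    rw [hmuabs] at h1
    nlinarith
  have hzβ : |z| ≤ β := hzb.trans hmu
  have hzmem : z ∈ Set.Icc (-β) β := by
    rcases abs_le.mp hzβ with ⟨h1, h2⟩; exact ⟨h1, h2⟩
  have humem : u ∈ Set.Icc (-β) β := by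
    constructor
    · linarith
    · nlinarith
  have hfz := hf z hzmem
  have hfu := hf u humem
  have huabs : |u| = u := abs_of_pos hu
  rw [huabs] at hfu
  have hfu' : α * u ^ 2 - u ^ 3 ≤ f u := by
    have := abs_le.mp hfu; linarith [this.1, this.2]
  have hfu'' : |α * u ^ 2 - f u| ≤ u ^ 3 := by
    rw [abs_sub_comm]; exact hfu
  -- |z + mu| bound
  have hzpm : |z + (m : ℝ) * u| ≤ (2 * M + 1) * u := by
    have h1 : |z + (m : ℝ) * u| ≤ |z - (m : ℝ) * u| + |2 * ((m : ℝ) * u)| := by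
      calc |z + (m : ℝ) * u| = |(z - (m : ℝ) * u) + 2 * ((m : ℝ) * u)| := by ring_nf
        _ ≤ _ := abs_add_le _ _
    rw [abs_mul, hmuabs] at h1
    have : |(2 : ℝ)| = 2 := by norm_num
    rw [this] at h1
    nlinarith
  -- main triangle inequality
  have hid : f z - (m : ℝ) ^ 2 * f u =
      (f z - α * z ^ 2) + α * (z - (m : ℝ) * u) * (z + (m : ℝ) * u)
        + (m : ℝ) ^ 2 * (α * u ^ 2 - f u) := by ring
  have hm2 : ((m : ℝ)) ^ 2 = M ^ 2 := (sq_abs _).symm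
  have habs : |f z - (m : ℝ) ^ 2 * f u| ≤
      |z| ^ 3 + α * |z - (m : ℝ) * u| * |z + (m : ℝ) * u| + M ^ 2 * u ^ 3 := by
    rw [hid]
    have h3 := abs_add_three (f z - α * z ^ 2)
      (α * (z - (m : ℝ) * u) * (z + (m : ℝ) * u)) ((m : ℝ) ^ 2 * (α * u ^ 2 - f u))
    have h4 : |α * (z - (m : ℝ) * u) * (z + (m : ℝ) * u)| =
        α * |z - (m : ℝ) * u| * |z + (m : ℝ) * u| := by
      rw [abs_mul, abs_mul, abs_of_pos hα]
    have h5 : |(m : ℝ) ^ 2 * (α * u ^ 2 - f u)| ≤ M ^ 2 * u ^ 3 := by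
      rw [abs_mul, abs_pow, ← hM]
      exact mul_le_mul_of_nonneg_left hfu'' (by positivity)
    calc _ ≤ _ := h3
      _ ≤ |z| ^ 3 + α * |z - (m : ℝ) * u| * |z + (m : ℝ) * u| + M ^ 2 * u ^ 3 := by
        rw [h4]; gcongr
  -- bound middle term: α * δ * |z+mu| ≤ α * (εu/α) * (2M+1)u = ε u (2M+1) u
  have hmid : α * |z - (m : ℝ) * u| * |z + (m : ℝ) * u| ≤ ε * u * ((2 * M + 1) * u) := by
    have h1 : α * |z - (m : ℝ) * u| ≤ ε * u := by
      have h := hδ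
      rw [le_div_iff₀ hα] at h
      nlinarith [h]
    exact mul_le_mul h1 hzpm (abs_nonneg _) (by positivity)
  -- |z|^3 bound
  have hz3 : |z| ^ 3 ≤ ((M + 1) * u) ^ 3 := by
    gcongr
  -- total upper bound
  have htot : |f z - (m : ℝ) ^ 2 * f u| ≤
      ((M + 1) * u) ^ 3 + ε * u * ((2 * M + 1) * u) + M ^ 2 * u ^ 3 := by
    have := habs
    linarith [hz3, hmid]
  -- lower bound for e * f u / α
  have hlow : e * u ^ 2 - u ^ 3 ≤ e * f u / α := by
    rw [le_div_iff₀ hα]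
    have h1 : e * (α * u ^ 2 - u ^ 3) ≤ e * f u :=
      mul_le_mul_of_nonneg_left hfu' he0.le
    have h2 : e * u ^ 3 ≤ α * u ^ 3 :=
      mul_le_mul_of_nonneg_right he2 (pow_pos hu 3).le
    linarith [h1, h2]
  -- final strict inequality
  have hfin : ((M + 1) * u) ^ 3 + ε * u * ((2 * M + 1) * u) + M ^ 2 * u ^ 3
      < e * u ^ 2 - u ^ 3 := by
    nlinarith [mul_pos he0 (mul_pos hu hu), pow_pos hu 3,
      mul_nonneg (mul_nonneg hM0 hM0) (pow_pos hu 3).le,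
      mul_nonneg hM0 (pow_pos hu 3).le,
      mul_nonneg (mul_nonneg (mul_nonneg hM0 hM0) hM0) (pow_pos hu 3).le]
  linarith
end

section
/- For every integer d ≥ 1 there exists a constant C_d > 0 such that for every closed B_d-circuit c of size n whose value v is nonzero, one has 2^{−2^{C_d·n}} < |v| < 2^{2^{C_d·n}}. -/
open scoped Classical

/-- A gate operation in a straight-line program (closed `B_d`-circuit).
Natural-number arguments are indices of earlier gates. -/
inductive GateOp where
  | zero : GateOp
  | one : GateOp
  | add (a b : ℕ) : GateOp
  | sub (a b : ℕ) : GateOp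
  | mul (a b : ℕ) : GateOp
  | ch (x n z p : ℕ) : GateOp
  | root (δ : ℕ) (args : Fin (δ + 1) → ℕ) : GateOp

/-- The largest real root of the polynomial `Σ_i a i · x^i`, if it exists,
and `0` otherwise. -/
noncomputable def largestRoot {δ : ℕ} (a : Fin (δ + 1) → ℝ) : ℝ :=
  if h : ∃ ζ : ℝ,
      IsGreatest {x : ℝ | ∑ i : Fin (δ + 1), a i * x ^ (i : ℕ) = 0} ζ
  then h.choose else 0

/-- The value of a single gate, given the list `prev` of values of all
earlier gates. -/
noncomputable def GateOp.step (prev : List ℝ) : GateOp → ℝ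
  | .zero => 0
  | .one => 1
  | .add a b => prev.getD a 0 + prev.getD b 0
  | .sub a b => prev.getD a 0 - prev.getD b 0
  | .mul a b => prev.getD a 0 * prev.getD b 0
  | .ch x n z p =>
      if prev.getD x 0 < 0 then prev.getD n 0
      else if prev.getD x 0 = 0 then prev.getD z 0
      else prev.getD p 0
  | .root _ args => largestRoot fun i => prev.getD (args i) 0

/-- The list of values of all gates of a circuit, in order. -/
noncomputable def circuitValues (c : List GateOp) : List ℝ :=
  c.foldl (fun prev g => prev ++ [g.step prev]) []

/-- The value of a closed circuit: the value of its last gate. -/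
noncomputable def circuitValue (c : List GateOp) : ℝ :=
  (circuitValues c).getD (c.length - 1) 0

/-- Well-formedness of one gate sitting at position `k` of a `B_d`-circuit:
all references point to strictly earlier gates and root gates have
`1 ≤ δ ≤ d`. -/
def GateOp.WF (d k : ℕ) : GateOp → Prop
  | .zero => True
  | .one => True
  | .add a b => a < k ∧ b < k
  | .sub a b => a < k ∧ b < k
  | .mul a b => a < k ∧ b < k
  | .ch x n z p => x < k ∧ n < k ∧ z < k ∧ p < k
  | .root δ args => 1 ≤ δ ∧ δ ≤ d ∧ ∀ i, args i < k

/-- A closed `B_d`-circuit: a straight-line program all of whose gates are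
well formed. -/
def IsCircuit (d : ℕ) (c : List GateOp) : Prop :=
  ∀ (k : ℕ) (hk : k < c.length), (c.get ⟨k, hk⟩).WF d k

/-!
Every gate value `v` is written as `x / y` with `x, y` algebraic integers of a number field
`L ⊆ ℂ` whose houses (largest absolute value of a conjugate) are at most `H`. Ring gates keep `L`
and replace `H` by at most `2 H²`. A root gate of degree `δ ≤ d` clears the denominators of its
coefficients; if `b` is the leading coefficient of the resulting polynomial with algebraic
integer coefficients, then `b ζ` is an algebraic integer, Cauchy's bound applied to every
conjugate polynomial bounds its house by `2 H^(δ+1)`, and `[L(ζ) : ℚ] ≤ d [L : ℚ]`. After `n`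
gates, `[L : ℚ] ≤ (d+1)^n` and `H ≤ 2^((d+3)^n)`. Finally, the norm of a nonzero algebraic
integer `α` is a nonzero integer, so `1 ≤ |α| house(α)^([L:ℚ]-1)`, whence
`H^(-[L:ℚ]) ≤ |v| ≤ H^[L:ℚ]`.
-/

open Polynomial NumberField Module

theorem Polynomial.norm_leadingCoeff_mul_le_of_isRoot {K : Type*} [NormedField K] {p : K[X]}
    (hp : p ≠ 0) {z : K} (hz : p.IsRoot z) {B : ℝ} (hB : ∀ i, ‖p.coeff i‖ ≤ B) :
    ‖p.leadingCoeff * z‖ ≤ 2 * B := by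
  set S : NNReal := (Finset.range p.natDegree).sup (‖p.coeff ·‖₊)
  have hS : (S : ℝ) ≤ B := by
    rw [← NNReal.coe_mk B ((norm_nonneg _).trans (hB 0)), NNReal.coe_le_coe, Finset.sup_le_iff]
    exact fun i _ => hB i
  have hroot : ‖z‖ < S / ‖p.leadingCoeff‖ + 1 := by
    exact_mod_cast hz.norm_lt_cauchyBound hp
  have hlc : 0 < ‖p.leadingCoeff‖ := norm_pos_iff.2 (leadingCoeff_ne_zero.2 hp)
  rw [norm_mul]
  calc ‖p.leadingCoeff‖ * ‖z‖ ≤ ‖p.leadingCoeff‖ * (S / ‖p.leadingCoeff‖ + 1) := by gcongr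
    _ = S + ‖p.leadingCoeff‖ := by field_simp
    _ ≤ 2 * B := by linarith [coeff_natDegree (p := p) ▸ hB p.natDegree]

theorem isIntegral_leadingCoeff_mul_of_isIntegral_coeff {R K E : Type*} [CommRing R] [CommRing K]
    [CommRing E] [Algebra R K] [Algebra K E] [Algebra R E] [IsScalarTower R K E] {p : K[X]}
    (hp : ∀ i, IsIntegral R (p.coeff i)) {x : E} (hx : aeval x p = 0) :
    IsIntegral R (algebraMap K E p.leadingCoeff * x) := by
  obtain ⟨q, rfl⟩ := (lifts_iff_coeff_lifts (f := algebraMap (integralClosure R K) K) p).2 fun n =>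
    ⟨(⟨p.coeff n, hp n⟩ : integralClosure R K), rfl⟩
  rw [coe_mapRingHom, aeval_map_algebraMap] at hx
  rw [coe_mapRingHom, leadingCoeff_map_of_injective Subtype.val_injective,
    ← IsScalarTower.algebraMap_apply, ← Algebra.smul_def]
  exact isIntegral_trans _ (isIntegral_leadingCoeff_smul q x hx)

namespace NumberField

variable {K : Type*} [Field K] [NumberField K]

theorem house_le_of_forall_le {α : K} {B : ℝ} (h : ∀ σ : K →+* ℂ, ‖σ α‖ ≤ B) :
    house α ≤ B := by
  have hB : 0 ≤ B := (norm_nonneg _).trans (h (Classical.arbitrary _))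
  rw [house_eq_sup', ← NNReal.coe_mk B hB, NNReal.coe_le_coe, Finset.sup'_le_iff]
  exact fun σ _ => h σ

theorem house_map_le {K' : Type*} [Field K'] [NumberField K'] (f : K →+* K') (α : K) :
    house (f α) ≤ house α :=
  house_le_of_forall_le fun σ => norm_embedding_le_house α (σ.comp f)

theorem house_neg (α : K) : house (-α) = house α := by
  simp only [house, map_neg, norm_neg]

theorem house_sub_le (α β : K) : house (α - β) ≤ house α + house β := by
  simpa only [sub_eq_add_neg, house_neg] using house_add_le α (-β)

theorem house_zero : house (0 : K) = 0 := by simpa using house_intCast (K := K) 0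

theorem house_one : house (1 : K) = 1 := by simpa using house_intCast (K := K) 1

theorem house_prod_le_prod_house {ι : Type*} (s : Finset ι) (f : ι → K) :
    house (∏ i ∈ s, f i) ≤ ∏ i ∈ s, house (f i) := by
  simpa only [house, map_prod] using Finset.norm_prod_le s _

theorem house_leadingCoeff_mul_le_of_eval₂_eq_zero {K' : Type*} [Field K'] [NumberField K']
    {ι : K →+* K'} {p : K[X]} (hp : p ≠ 0) {B : ℝ} (hB : ∀ i, house (p.coeff i) ≤ B) {z : K'}
    (hz : p.eval₂ ι z = 0) : house (ι p.leadingCoeff * z) ≤ 2 * B := by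
  refine house_le_of_forall_le fun σ => ?_
  let τ := σ.comp ι
  have hτ : (p.map τ).IsRoot (σ z) := by
    rw [IsRoot, eval_map, ← hom_eval₂, hz, map_zero]
  have := norm_leadingCoeff_mul_le_of_isRoot ((Polynomial.map_ne_zero_iff τ.injective).2 hp) hτ
    fun i => coeff_map τ i ▸ (norm_embedding_le_house _ τ).trans (hB i)
  rw [leadingCoeff_map] at this
  rwa [map_mul]

theorem one_le_norm_algebraNorm {α : K} (hα : IsIntegral ℤ α) (h0 : α ≠ 0) :
    1 ≤ ‖Algebra.norm ℚ α‖ := by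
  let a : 𝓞 K := ⟨α, hα⟩
  have hne : Algebra.norm ℤ a ≠ 0 := by
    rw [Ne, Algebra.norm_eq_zero_iff]
    exact fun h' => h0 (congrArg Subtype.val h')
  have h : ((Algebra.norm ℤ a : ℤ) : ℚ) = Algebra.norm ℚ α := Algebra.coe_norm_int a
  rw [← h, Int.norm_cast_rat, Int.norm_eq_abs]
  exact_mod_cast Int.one_le_abs hne

theorem house_pos {α : K} (h0 : α ≠ 0) : 0 < house α :=
  let σ : K →+* ℂ := Classical.arbitrary _
  (norm_pos_iff.2 ((map_ne_zero σ).2 h0)).trans_le (norm_embedding_le_house α σ)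

theorem inv_house_pow_le_norm {α : K} (hα : IsIntegral ℤ α) (h0 : α ≠ 0) (σ : K →+* ℂ) :
    (house α ^ (finrank ℚ K - 1))⁻¹ ≤ ‖σ α‖ := by
  have h := (one_le_norm_algebraNorm hα h0).trans (norm_norm_le_norm_mul_house_pow α σ)
  rw [inv_le_iff_one_le_mul₀ (pow_pos (house_pos h0) _)]
  linarith

variable (K) in
def boundedIntegers (H : ℝ) : Set K := {α | IsIntegral ℤ α ∧ house α ≤ H}

namespace boundedIntegers

variable {H H' : ℝ} {α β : K}

theorem mono (h : H ≤ H') : boundedIntegers K H ⊆ boundedIntegers K H' :=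
  fun _ hα => ⟨hα.1, hα.2.trans h⟩

theorem zero_mem (hH : 0 ≤ H) : (0 : K) ∈ boundedIntegers K H :=
  ⟨isIntegral_zero, house_zero.trans_le hH⟩

theorem one_mem (hH : 1 ≤ H) : (1 : K) ∈ boundedIntegers K H :=
  ⟨isIntegral_one, house_one.trans_le hH⟩

theorem add_mem (hα : α ∈ boundedIntegers K H) (hβ : β ∈ boundedIntegers K H') :
    α + β ∈ boundedIntegers K (H + H') :=
  ⟨hα.1.add hβ.1, (house_add_le α β).trans (add_le_add hα.2 hβ.2)⟩

theorem sub_mem (hα : α ∈ boundedIntegers K H) (hβ : β ∈ boundedIntegers K H') :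
    α - β ∈ boundedIntegers K (H + H') :=
  ⟨hα.1.sub hβ.1, (house_sub_le α β).trans (add_le_add hα.2 hβ.2)⟩

theorem mul_mem (hα : α ∈ boundedIntegers K H) (hβ : β ∈ boundedIntegers K H') :
    α * β ∈ boundedIntegers K (H * H') :=
  ⟨hα.1.mul hβ.1, (house_mul_le α β).trans
    (mul_le_mul hα.2 hβ.2 (house_nonneg β) ((house_nonneg α).trans hα.2))⟩

theorem prod_mem {ι : Type*} {s : Finset ι} {f : ι → K}
    (hf : ∀ i ∈ s, f i ∈ boundedIntegers K H) :
    ∏ i ∈ s, f i ∈ boundedIntegers K (H ^ s.card) := by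
  refine ⟨IsIntegral.prod _ fun i hi => (hf i hi).1, (house_prod_le_prod_house s f).trans ?_⟩
  rw [← Finset.prod_const]
  exact Finset.prod_le_prod (fun i _ => house_nonneg _) fun i hi => (hf i hi).2

theorem map_mem {K' : Type*} [Field K'] [NumberField K'] (f : K →+* K')
    (hα : α ∈ boundedIntegers K H) : f α ∈ boundedIntegers K' H :=
  ⟨hα.1.map f.toIntAlgHom, (house_map_le f α).trans hα.2⟩

theorem norm_le (hα : α ∈ boundedIntegers K H) (σ : K →+* ℂ) : ‖σ α‖ ≤ H :=
  (norm_embedding_le_house α σ).trans hα.2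

theorem inv_pow_le_norm (hα : α ∈ boundedIntegers K H) (h0 : α ≠ 0) (σ : K →+* ℂ) :
    (H ^ (finrank ℚ K - 1))⁻¹ ≤ ‖σ α‖ :=
  (inv_anti₀ (pow_pos (house_pos h0) _) (pow_le_pow_left₀ (house_nonneg α) hα.2 _)).trans
    (inv_house_pow_le_norm hα.1 h0 σ)

end boundedIntegers

end NumberField

def IsBoundedQuotient (L : IntermediateField ℚ ℂ) [NumberField L] (H : ℝ) (z : ℂ) : Prop :=
  ∃ x ∈ boundedIntegers L H, ∃ y ∈ boundedIntegers L H, y ≠ 0 ∧ z = x / y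

namespace IsBoundedQuotient

variable {L : IntermediateField ℚ ℂ} [NumberField L] {H : ℝ} {u v : ℂ}

theorem mono {H' : ℝ} (h : IsBoundedQuotient L H v) (hH : H ≤ H') :
    IsBoundedQuotient L H' v := by
  obtain ⟨x, hx, y, hy, hy0, rfl⟩ := h
  exact ⟨x, boundedIntegers.mono hH hx, y, boundedIntegers.mono hH hy, hy0, rfl⟩

theorem of_le {L' : IntermediateField ℚ ℂ} [NumberField L'] (h : IsBoundedQuotient L H v)
    (hL : L ≤ L') : IsBoundedQuotient L' H v := by
  obtain ⟨x, hx, y, hy, hy0, rfl⟩ := h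
  let ι := (IntermediateField.inclusion hL).toRingHom
  exact ⟨ι x, boundedIntegers.map_mem ι hx, ι y, boundedIntegers.map_mem ι hy,
    (map_ne_zero ι).2 hy0, rfl⟩

theorem of_mem (hH : 1 ≤ H) (x : L) (hx : x ∈ boundedIntegers L H) :
    IsBoundedQuotient L H x :=
  ⟨x, hx, 1, boundedIntegers.one_mem hH, one_ne_zero, by simp⟩

theorem zero (hH : 1 ≤ H) : IsBoundedQuotient L H 0 := by
  simpa using of_mem hH 0 (boundedIntegers.zero_mem (zero_le_one.trans hH))

theorem one (hH : 1 ≤ H) : IsBoundedQuotient L H 1 := by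
  simpa using of_mem hH 1 (boundedIntegers.one_mem hH)

theorem add (hu : IsBoundedQuotient L H u) (hv : IsBoundedQuotient L H v) :
    IsBoundedQuotient L (2 * H ^ 2) (u + v) := by
  obtain ⟨x, hx, y, hy, hy0, rfl⟩ := hu
  obtain ⟨x', hx', y', hy', hy0', rfl⟩ := hv
  have hH : 0 ≤ H := (house_nonneg y).trans hy.2
  refine ⟨x * y' + x' * y, ?_, y * y', ?_, mul_ne_zero hy0 hy0', ?_⟩
  · simpa [two_mul, sq] using
      boundedIntegers.add_mem (boundedIntegers.mul_mem hx hy') (boundedIntegers.mul_mem hx' hy)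
  · exact boundedIntegers.mono (by nlinarith) (boundedIntegers.mul_mem hy hy')
  · have : (y : ℂ) ≠ 0 := by exact_mod_cast hy0
    have : (y' : ℂ) ≠ 0 := by exact_mod_cast hy0'
    push_cast
    field_simp

theorem sub (hu : IsBoundedQuotient L H u) (hv : IsBoundedQuotient L H v) :
    IsBoundedQuotient L (2 * H ^ 2) (u - v) := by
  obtain ⟨x, hx, y, hy, hy0, rfl⟩ := hu
  obtain ⟨x', hx', y', hy', hy0', rfl⟩ := hv
  have hH : 0 ≤ H := (house_nonneg y).trans hy.2
  refine ⟨x * y' - x' * y, ?_, y * y', ?_, mul_ne_zero hy0 hy0', ?_⟩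
  · simpa [two_mul, sq] using
      boundedIntegers.sub_mem (boundedIntegers.mul_mem hx hy') (boundedIntegers.mul_mem hx' hy)
  · exact boundedIntegers.mono (by nlinarith) (boundedIntegers.mul_mem hy hy')
  · have : (y : ℂ) ≠ 0 := by exact_mod_cast hy0
    have : (y' : ℂ) ≠ 0 := by exact_mod_cast hy0'
    push_cast
    field_simp

theorem mul (hu : IsBoundedQuotient L H u) (hv : IsBoundedQuotient L H v) :
    IsBoundedQuotient L (H ^ 2) (u * v) := by
  obtain ⟨x, hx, y, hy, hy0, rfl⟩ := hu
  obtain ⟨x', hx', y', hy', hy0', rfl⟩ := hv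
  refine ⟨x * x', sq H ▸ boundedIntegers.mul_mem hx hx', y * y',
    sq H ▸ boundedIntegers.mul_mem hy hy', mul_ne_zero hy0 hy0', ?_⟩
  push_cast
  ring

theorem norm_mem_Icc (h : IsBoundedQuotient L H v) (hv : v ≠ 0) :
    ‖v‖ ∈ Set.Icc (H ^ finrank ℚ L)⁻¹ (H ^ finrank ℚ L) := by
  obtain ⟨x, hx, y, hy, hy0, rfl⟩ := h
  have hx0 : x ≠ 0 := by rintro rfl; simp at hv
  have hH : 0 < H := (house_pos hy0).trans_le hy.2
  have hD : H ^ finrank ℚ L = H ^ (finrank ℚ L - 1) * H := by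
    rw [← pow_succ, Nat.sub_add_cancel Module.finrank_pos]
  let σ : L →+* ℂ := L.val.toRingHom
  change _ ≤ ‖σ x / σ y‖ ∧ ‖σ x / σ y‖ ≤ _
  rw [norm_div, hD]
  constructor
  · rw [mul_inv, ← div_eq_mul_inv]
    exact div_le_div₀ (norm_nonneg _) (boundedIntegers.inv_pow_le_norm hx hx0 σ)
      (norm_pos_iff.2 ((map_ne_zero σ).2 hy0)) (boundedIntegers.norm_le hy σ)
  · rw [mul_comm, ← div_inv_eq_mul]
    exact div_le_div₀ hH.le (boundedIntegers.norm_le hx σ) (by positivity)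
      (boundedIntegers.inv_pow_le_norm hy hy0 σ)

theorem exists_common_denominator {ι : Type*} [Fintype ι] {a : ι → ℂ}
    (ha : ∀ i, IsBoundedQuotient L H (a i)) :
    ∃ Y : L, Y ≠ 0 ∧ ∃ b : ι → L,
      (∀ i, b i ∈ boundedIntegers L (H ^ Fintype.card ι)) ∧ ∀ i, (b i : ℂ) = Y * a i := by
  choose x hx y hy hy0 ha using ha
  refine ⟨∏ j, y j, Finset.prod_ne_zero_iff.2 fun j _ => hy0 j,
    fun i => x i * ∏ j ∈ Finset.univ.erase i, y j, fun i => ?_, fun i => ?_⟩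
  · have hcard : Fintype.card ι = (Finset.univ.erase i).card + 1 := by
      rw [Finset.card_erase_of_mem (Finset.mem_univ i), Finset.card_univ,
        Nat.sub_add_cancel (Fintype.card_pos_iff.2 ⟨i⟩)]
    rw [hcard, pow_succ']
    exact boundedIntegers.mul_mem (hx i) (boundedIntegers.prod_mem fun j _ => hy j)
  · have : (y i : ℂ) ≠ 0 := by exact_mod_cast hy0 i
    rw [ha i, ← Finset.mul_prod_erase Finset.univ y (Finset.mem_univ i)]
    push_cast
    field_simp

end IsBoundedQuotient

theorem List.getD_mem_or_eq_default {α : Type*} (l : List α) (n : ℕ) (x : α) :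
    l.getD n x ∈ l ∨ l.getD n x = x := by
  by_cases hn : n < l.length
  · exact Or.inl (List.getD_eq_getElem l x hn ▸ List.getElem_mem hn)
  · exact Or.inr (List.getD_eq_default l x (not_lt.1 hn))

theorem largestRoot_eq_zero_or {δ : ℕ} (a : Fin (δ + 1) → ℝ) :
    largestRoot a = 0 ∨ (∃ i, a i ≠ 0) ∧ ∑ i, a i * largestRoot a ^ (i : ℕ) = 0 := by
  unfold largestRoot
  split_ifs with h
  · refine Or.inr ⟨?_, h.choose_spec.1⟩
    -- if all coefficients vanish, every real number is a root and there is no largest one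
    by_contra! hzero
    have := h.choose_spec.2 (show h.choose + 1 ∈ _ by simp [hzero])
    linarith
  · exact Or.inl rfl

section

variable {L : IntermediateField ℚ ℂ} [NumberField L]

theorem exists_numberField_mem_finrank_le {p : L[X]} (hp : p ≠ 0) {z : ℂ} (hz : aeval z p = 0) :
    ∃ L' : IntermediateField ℚ ℂ, L ≤ L' ∧ z ∈ L' ∧ ∃ _ : NumberField L',
      finrank ℚ L' ≤ finrank ℚ L * p.natDegree := by
  have hzL : IsIntegral L z := IsAlgebraic.isIntegral ⟨p, hp, hz⟩
  let M := IntermediateField.adjoin L {z}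
  have : FiniteDimensional L M := IntermediateField.adjoin.finiteDimensional hzL
  have : FiniteDimensional ℚ (M.restrictScalars ℚ) := FiniteDimensional.trans ℚ L M
  refine ⟨M.restrictScalars ℚ, fun x hx => M.algebraMap_mem ⟨x, hx⟩,
    IntermediateField.mem_adjoin_simple_self L z, ⟨⟩, ?_⟩
  change finrank ℚ M ≤ _
  rw [← Module.finrank_mul_finrank ℚ L M, IntermediateField.adjoin.finrank hzL]
  exact Nat.mul_le_mul_left _ (natDegree_le_of_dvd (minpoly.dvd L z hz) hp)

theorem exists_isBoundedQuotient_of_aeval_eq_zero {p : L[X]} (hp : p ≠ 0) {B : ℝ}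
    (hcoeff : ∀ i, p.coeff i ∈ boundedIntegers L B) {z : ℂ} (hz : aeval z p = 0) :
    ∃ L' : IntermediateField ℚ ℂ, L ≤ L' ∧ ∃ _ : NumberField L',
      finrank ℚ L' ≤ finrank ℚ L * p.natDegree ∧ IsBoundedQuotient L' (2 * B) z := by
  obtain ⟨L', hLL', hzL', _, hrank⟩ := exists_numberField_mem_finrank_le hp hz
  let ι : L →+* L' := (IntermediateField.inclusion hLL').toRingHom
  let z' : L' := ⟨z, hzL'⟩
  have hroot : p.eval₂ ι z' = 0 := by
    apply L'.val.toRingHom.injective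
    rw [hom_eval₂, map_zero]
    exact hz
  have hlc : p.leadingCoeff ∈ boundedIntegers L B := coeff_natDegree (p := p) ▸ hcoeff _
  have hlc0 : ι p.leadingCoeff ≠ 0 := (map_ne_zero ι).2 (leadingCoeff_ne_zero.2 hp)
  have hnum : ι p.leadingCoeff * z' ∈ boundedIntegers L' (2 * B) := by
    refine ⟨?_, house_leadingCoeff_mul_le_of_eval₂_eq_zero hp (fun i => (hcoeff i).2) hroot⟩
    rw [← isIntegral_algebraMap_iff (algebraMap L' ℂ).injective]
    exact isIntegral_leadingCoeff_mul_of_isIntegral_coeff (fun i => (hcoeff i).1) hz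
  refine ⟨L', hLL', ‹_›, hrank, _, hnum, ι p.leadingCoeff,
    boundedIntegers.mono (by linarith [house_nonneg p.leadingCoeff, hlc.2])
      (boundedIntegers.map_mem ι hlc), hlc0, ?_⟩
  have : ((ι p.leadingCoeff : L') : ℂ) ≠ 0 := by exact_mod_cast hlc0
  push_cast
  field_simp
  rfl

theorem exists_isBoundedQuotient_of_sum_eq_zero {δ : ℕ} {H : ℝ} {a : Fin (δ + 1) → ℂ}
    (ha : ∀ i, IsBoundedQuotient L H (a i)) (hne : ∃ i, a i ≠ 0) {z : ℂ}
    (hz : ∑ i, a i * z ^ (i : ℕ) = 0) :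
    ∃ L' : IntermediateField ℚ ℂ, L ≤ L' ∧ ∃ _ : NumberField L',
      finrank ℚ L' ≤ finrank ℚ L * δ ∧ IsBoundedQuotient L' (2 * H ^ (δ + 1)) z := by
  obtain ⟨Y, hY, b, hb, hbY⟩ := IsBoundedQuotient.exists_common_denominator ha
  rw [Fintype.card_fin] at hb
  set p := ofFn (δ + 1) b
  have hcoeff : ∀ i, p.coeff i ∈ boundedIntegers L (H ^ (δ + 1)) := fun i => by
    by_cases hi : i < δ + 1
    · rw [ofFn_coeff_eq_val_of_lt _ hi]; exact hb _
    · rw [ofFn_coeff_eq_zero_of_ge _ (not_lt.1 hi)]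
      exact boundedIntegers.zero_mem ((house_nonneg _).trans (hb 0).2)
  have hp : p ≠ 0 := by
    obtain ⟨i, hi⟩ := hne
    intro h0
    have : b i = 0 := by
      rw [← ofFn_coeff_eq_val_of_lt b i.isLt]
      exact congrArg (coeff · i) h0
    have hY' : (Y : ℂ) ≠ 0 := by exact_mod_cast hY
    exact mul_ne_zero hY' hi (by rw [← hbY, this, ZeroMemClass.coe_zero])
  have hdeg : p.natDegree ≤ δ := Nat.lt_succ_iff.1 (ofFn_natDegree_lt (Nat.succ_pos δ) b)
  have hroot : aeval z p = 0 := by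
    simp only [p, ofFn_eq_sum_monomial, map_sum, aeval_monomial]
    change ∑ i, (b i : ℂ) * z ^ (i : ℕ) = 0
    simp only [hbY, mul_assoc, ← Finset.mul_sum, hz, mul_zero]
  obtain ⟨L', hLL', hL', hrank, hq⟩ :=
    exists_isBoundedQuotient_of_aeval_eq_zero hp hcoeff hroot
  exact ⟨L', hLL', hL', hrank.trans (Nat.mul_le_mul_left _ hdeg), hq⟩

theorem GateOp.exists_isBoundedQuotient_step {d k : ℕ} {g : GateOp} (hg : g.WF d k)
    {vs : List ℝ} {H : ℝ} (hH : 1 ≤ H) (hvs : ∀ v ∈ vs, IsBoundedQuotient L H v) :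
    ∃ L' : IntermediateField ℚ ℂ, L ≤ L' ∧ ∃ _ : NumberField L',
      finrank ℚ L' ≤ finrank ℚ L * (d + 1) ∧
      IsBoundedQuotient L' (2 * H ^ (d + 2)) (g.step vs) := by
  -- an out-of-range reference reads the default value `0`, which is a bounded quotient too
  have hread : ∀ j, IsBoundedQuotient L H (vs.getD j 0) := fun j =>
    (vs.getD_mem_or_eq_default j 0).elim (hvs _) fun h => by
      rw [h, Complex.ofReal_zero]
      exact .zero hH
  have hrank : finrank ℚ L ≤ finrank ℚ L * (d + 1) := Nat.le_mul_of_pos_right _ d.succ_pos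
  have hpow : ∀ m ≤ d + 2, H ^ m ≤ 2 * H ^ (d + 2) := fun m hm => by
    linarith [pow_le_pow_right₀ hH hm, one_le_pow₀ (n := d + 2) hH]
  have hpow₂ : ∀ m ≤ d + 2, 2 * H ^ m ≤ 2 * H ^ (d + 2) := fun m hm =>
    mul_le_mul_of_nonneg_left (pow_le_pow_right₀ hH hm) zero_le_two
  have hone : 1 ≤ 2 * H ^ (d + 2) := by simpa using hpow 0 (by omega)
  have hself : H ≤ 2 * H ^ (d + 2) := by simpa using hpow 1 (by omega)
  cases g with
  | zero => exact ⟨L, le_rfl, ‹_›, hrank, by simpa [GateOp.step] using .zero hone⟩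
  | one => exact ⟨L, le_rfl, ‹_›, hrank, by simpa [GateOp.step] using .one hone⟩
  | add a b => exact ⟨L, le_rfl, ‹_›, hrank, by
      push_cast [GateOp.step]; exact ((hread a).add (hread b)).mono (hpow₂ 2 (by omega))⟩
  | sub a b => exact ⟨L, le_rfl, ‹_›, hrank, by
      push_cast [GateOp.step]; exact ((hread a).sub (hread b)).mono (hpow₂ 2 (by omega))⟩
  | mul a b => exact ⟨L, le_rfl, ‹_›, hrank, by
      push_cast [GateOp.step]; exact ((hread a).mul (hread b)).mono (hpow 2 (by omega))⟩
  | ch x n z p =>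
    refine ⟨L, le_rfl, ‹_›, hrank, ?_⟩
    simp only [GateOp.step]
    split_ifs <;> exact (hread _).mono hself
  | root δ args =>
    obtain ⟨-, hδ, -⟩ := hg
    rcases largestRoot_eq_zero_or (fun i => vs.getD (args i) 0) with h0 | ⟨hne, hroot⟩
    · refine ⟨L, le_rfl, ‹_›, hrank, ?_⟩
      rw [GateOp.step, h0, Complex.ofReal_zero]
      exact .zero hone
    · obtain ⟨L', hLL', hL', hrank', hq⟩ := exists_isBoundedQuotient_of_sum_eq_zero
        (a := fun i => (vs.getD (args i) 0 : ℂ)) (fun i => hread _)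
        (by exact_mod_cast hne) (z := (largestRoot fun i => vs.getD (args i) 0 : ℝ))
        (by exact_mod_cast hroot)
      exact ⟨L', hLL', hL', hrank'.trans (Nat.mul_le_mul_left _ (by omega)),
        hq.mono (hpow₂ _ (by omega))⟩

end

noncomputable def heightBound (d n : ℕ) : ℝ := 2 ^ ((d + 3) ^ n)

theorem one_le_heightBound (d n : ℕ) : 1 ≤ heightBound d n := one_le_pow₀ one_le_two

theorem heightBound_le_succ (d n : ℕ) : heightBound d n ≤ heightBound d (n + 1) :=
  pow_le_pow_right₀ one_le_two (Nat.pow_le_pow_right (by omega) n.le_succ)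

theorem two_mul_heightBound_pow_le (d n : ℕ) :
    2 * heightBound d n ^ (d + 2) ≤ heightBound d (n + 1) := by
  have hX : 1 ≤ (d + 3) ^ n := Nat.one_le_pow _ _ (by omega)
  rw [heightBound, heightBound, ← pow_mul, ← pow_succ']
  exact pow_le_pow_right₀ one_le_two (by rw [pow_succ]; nlinarith)

theorem heightBound_pow (d n : ℕ) :
    heightBound d n ^ ((d + 1) ^ n) = 2 ^ (((d + 3) * (d + 1)) ^ n) := by
  rw [heightBound, ← pow_mul, mul_pow]

theorem circuitValues_concat (c : List GateOp) (g : GateOp) :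
    circuitValues (c ++ [g]) = circuitValues c ++ [g.step (circuitValues c)] := by
  simp [circuitValues, List.foldl_append]

theorem IsCircuit.exists_wf_of_mem {d : ℕ} {c : List GateOp} (hc : IsCircuit d c) {g : GateOp}
    (hg : g ∈ c) : ∃ k, g.WF d k := by
  obtain ⟨k, hk, rfl⟩ := List.mem_iff_getElem.1 hg
  exact ⟨k, hc k hk⟩

theorem exists_isBoundedQuotient_circuitValues {d : ℕ} {c : List GateOp}
    (hc : ∀ g ∈ c, ∃ k, g.WF d k) :
    ∃ L : IntermediateField ℚ ℂ, ∃ _ : NumberField L, finrank ℚ L ≤ (d + 1) ^ c.length ∧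
      ∀ v ∈ circuitValues c, IsBoundedQuotient L (heightBound d c.length) v := by
  induction c using List.reverseRecOn with
  | nil =>
    exact ⟨⊥, ⟨⟩, by simp [IntermediateField.finrank_bot], by simp [circuitValues]⟩
  | append_singleton c g ih =>
    obtain ⟨L, hL, hrank, hvals⟩ := ih fun g' hg' => hc g' (List.mem_append_left _ hg')
    obtain ⟨k, hg⟩ := hc g (by simp)
    obtain ⟨L', hLL', hL', hrank', hnew⟩ :=
      GateOp.exists_isBoundedQuotient_step hg (one_le_heightBound d c.length) hvals
    refine ⟨L', hL', ?_, ?_⟩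
    · rw [List.length_append, List.length_singleton, pow_succ]
      exact hrank'.trans (Nat.mul_le_mul_right _ hrank)
    · rw [circuitValues_concat, List.length_append, List.length_singleton]
      intro v hv
      rcases List.mem_append.1 hv with hv | hv
      · exact ((hvals v hv).of_le hLL').mono (heightBound_le_succ d _)
      · rw [List.mem_singleton.1 hv]
        exact hnew.mono (two_mul_heightBound_pow_le d _)

theorem natCast_pow_lt_two_rpow (d : ℕ) {n : ℕ} (hn : n ≠ 0) :
    ((((d + 3) * (d + 1)) ^ n : ℕ) : ℝ) < 2 ^ ((2 * (d + 3) : ℝ) * n) := by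
  have hbase : (d + 3) * (d + 1) < 2 ^ (2 * (d + 3)) := by
    rw [two_mul, pow_add]
    exact (Nat.mul_lt_mul_of_pos_left (by omega) (by omega)).trans_le
      (Nat.mul_le_mul (Nat.lt_two_pow_self).le (Nat.lt_two_pow_self).le)
  have hcast : (2 * (d + 3) : ℝ) * n = ((2 * (d + 3) * n : ℕ) : ℝ) := by push_cast; ring
  rw [hcast, Real.rpow_natCast, pow_mul]
  exact_mod_cast Nat.pow_lt_pow_left hbase hn

theorem circuit_zero_bound_general (d : ℕ) :
    ∃ C : ℝ, 0 < C ∧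
      ∀ c : List GateOp, IsCircuit d c → circuitValue c ≠ 0 →
        (2 : ℝ) ^ (-(2 : ℝ) ^ (C * (c.length : ℝ))) < |circuitValue c| ∧
        |circuitValue c| < (2 : ℝ) ^ ((2 : ℝ) ^ (C * (c.length : ℝ))) := by
  refine ⟨2 * (d + 3), by positivity, fun c hc hv => ?_⟩
  obtain ⟨L, _, hrank, hvals⟩ :=
    exists_isBoundedQuotient_circuitValues fun g hg => hc.exists_wf_of_mem hg
  have hmem : circuitValue c ∈ circuitValues c :=
    ((circuitValues c).getD_mem_or_eq_default _ 0).resolve_right hv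
  have hn : c.length ≠ 0 := fun h => by
    rw [List.length_eq_zero_iff.1 h] at hmem
    exact List.not_mem_nil hmem
  obtain ⟨hlow, hupp⟩ := (hvals _ hmem).norm_mem_Icc (Complex.ofReal_ne_zero.2 hv)
  rw [Complex.norm_real, Real.norm_eq_abs] at hlow hupp
  set N := ((d + 3) * (d + 1)) ^ c.length
  have hH : heightBound d c.length ^ finrank ℚ L ≤ 2 ^ N :=
    heightBound_pow d _ ▸ pow_le_pow_right₀ (one_le_heightBound d _) hrank
  have hN := natCast_pow_lt_two_rpow d hn
  constructor
  · calc (2 : ℝ) ^ (-(2 : ℝ) ^ ((2 * (d + 3) : ℝ) * c.length)) < 2 ^ (-(N : ℝ)) :=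
          Real.rpow_lt_rpow_of_exponent_lt one_lt_two (neg_lt_neg hN)
      _ = ((2 : ℝ) ^ N)⁻¹ := by rw [Real.rpow_neg zero_le_two, Real.rpow_natCast]
      _ ≤ _ := (inv_anti₀ (pow_pos (one_pos.trans_le (one_le_heightBound d _)) _) hH).trans hlow
  · calc |circuitValue c| ≤ (2 : ℝ) ^ (N : ℝ) := by rw [Real.rpow_natCast]; exact hupp.trans hH
      _ < _ := Real.rpow_lt_rpow_of_exponent_lt one_lt_two hN

/-- For every `d ≥ 1` there is a constant `C_d > 0` such that
every closed `B_d`-circuit of size `n` with nonzero value `v` satisfies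
`2^(-2^(C_d·n)) < |v| < 2^(2^(C_d·n))`. -/
theorem circuit_zero_bound (d : ℕ) (hd : 1 ≤ d) :
    ∃ C : ℝ, 0 < C ∧
      ∀ c : List GateOp, IsCircuit d c → circuitValue c ≠ 0 →
        (2 : ℝ) ^ (-(2 : ℝ) ^ (C * (c.length : ℝ))) < |circuitValue c| ∧
        |circuitValue c| < (2 : ℝ) ^ ((2 : ℝ) ^ (C * (c.length : ℝ))) :=
  circuit_zero_bound_general d
end
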